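/- Let N = 2^M for a positive integer M. The modulo-DFT sensing model is identifiable on ℂ^N_𝒱 if and only if 0 ∈ 𝒱, 2^{M−1} ∈ 𝒱, and for every m ∈ {0,1,…,M−2}, the set 𝒱 contains at least one element of {i·2^{M−m} + 2^{M−m−2} : 0 ≤ i ≤ 2^m − 1} and at least one element of {i·2^{M−m} + 3·2^{M−m−2} : 0 ≤ i ≤ 2^m − 1}. -/

import Mathlib

/-!
Write `ζ = exp (2πi/N)`. The inverse DFT has entries `N^{-1/2} ζ^{nm}`, so the signals whose DFT is
a Gaussian integer vector are `s_n = N^{-1/2} p(ζ^n)` with `p ∈ ℤ[i][X]` of degree `< N`: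
identifiability on `ℂ^N_𝒱` says that such a `p` vanishing at `ζ^n` for all `n ∈ 𝒱` is zero.

For `N = 2^M` the `N`-th roots of unity fall into the classes `{1}`, `{-1}` and, for `m ≤ M - 2`,
the roots of `X^{2^m} - i` and of `X^{2^m} + i`; these are the primitive `2^{m+2}`-th roots of
unity, and the two polynomials are irreducible over `ℚ(i)` because `[ℚ(ζ_{2^{m+2}}) : ℚ] = 2^{m+1}`.
The root `ζ^n` of `X^{2^m} - i^c` has `n ≡ c·2^{M-m-2} (mod 2^{M-m})`. A Gaussian polynomial
vanishing at one root of a class vanishes on the whole class, so if `𝒱` meets every class it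
vanishes at all `N` roots of unity. If `𝒱` misses the roots of a factor `g` of `X^N - 1`, then
`(X^N - 1)/g` is a nonzero polynomial of degree `< N` vanishing on `ζ^𝒱`.
-/

open Polynomial

noncomputable def dft (N : ℕ) : Matrix (Fin N) (Fin N) ℂ :=
  Matrix.of fun n₁ n₂ : Fin N => (1 / Real.sqrt N : ℂ) *
    Complex.exp (-(2 * Real.pi * Complex.I * (n₁ : ℕ) * (n₂ : ℕ)) / N)

/-- A complex number is a Gaussian integer if its real and imaginary parts are integers. -/
def IsGaussianInt (z : ℂ) : Prop := ∃ a b : ℤ, z = (a : ℂ) + (b : ℂ) * Complex.I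

/-- Identifiability of the modulo-DFT sensing model on `ℂ^N_𝒱`: any two signals
supported off `𝒱` whose DFT images differ by a Gaussian integer vector coincide. -/
def ModuloDFTIdentifiable (N : ℕ) (V : Set ℕ) : Prop :=
  ∀ s s' : Fin N → ℂ,
    (∀ n : Fin N, (n : ℕ) ∈ V → s n = 0) →
    (∀ n : Fin N, (n : ℕ) ∈ V → s' n = 0) →
    (∀ m : Fin N, IsGaussianInt ((dft N).mulVec s m - (dft N).mulVec s' m)) →
    s = s'

open scoped Matrix

noncomputable def dftRoot (N : ℕ) : ℂ := Complex.exp (2 * Real.pi * Complex.I / N)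

lemma isPrimitiveRoot_dftRoot {N : ℕ} (hN : N ≠ 0) : IsPrimitiveRoot (dftRoot N) N :=
  Complex.isPrimitiveRoot_exp N hN

lemma dftRoot_pow (N k : ℕ) : dftRoot N ^ k = Complex.exp (2 * Real.pi * Complex.I * k / N) := by
  rw [dftRoot, ← Complex.exp_nat_mul]; ring_nf

lemma dft_apply_eq (N : ℕ) (a b : Fin N) :
    dft N a b = (1 / Real.sqrt N : ℂ) * (dftRoot N ^ ((a : ℕ) * b))⁻¹ := by
  rw [dft, Matrix.of_apply, dftRoot_pow, ← Complex.exp_neg]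
  push_cast; ring_nf

noncomputable def idft (N : ℕ) : Matrix (Fin N) (Fin N) ℂ :=
  Matrix.of fun a b : Fin N => (1 / Real.sqrt N : ℂ) * dftRoot N ^ ((a : ℕ) * b)

lemma IsPrimitiveRoot.pow_eq_pow_iff_modEq {M : Type*} [CommMonoid M] {ζ : M} {k : ℕ}
    (h : IsPrimitiveRoot ζ k) (hk : k ≠ 0) {a b : ℕ} : ζ ^ a = ζ ^ b ↔ a ≡ b [MOD k] := by
  rw [(h.isOfFinOrder hk).pow_eq_pow_iff_modEq, ← h.eq_orderOf]

lemma IsPrimitiveRoot.sum_pow_div_pow {K : Type*} [Field K] {ζ : K} {N : ℕ}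
    (hζ : IsPrimitiveRoot ζ N) (a b : Fin N) :
    ∑ n : Fin N, (ζ ^ (b : ℕ) / ζ ^ (a : ℕ)) ^ (n : ℕ) = if a = b then (N : K) else 0 := by
  have hN : N ≠ 0 := (Fin.pos a).ne'
  have hζ0 : ζ ≠ 0 := hζ.ne_zero hN
  split_ifs with hab
  · simp [hab, hζ0]
  · have hne : ζ ^ (b : ℕ) / ζ ^ (a : ℕ) ≠ 1 := by
      rw [Ne, div_eq_one_iff_eq (pow_ne_zero _ hζ0)]
      exact fun h => hab (Fin.ext (hζ.pow_inj a.isLt b.isLt h.symm))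
    rw [Fin.sum_univ_eq_sum_range (fun n => (ζ ^ (b : ℕ) / ζ ^ (a : ℕ)) ^ n), geom_sum_eq hne,
      div_pow, ← pow_mul, ← pow_mul, mul_comm (b : ℕ), mul_comm (a : ℕ), pow_mul, pow_mul,
      hζ.pow_eq_one]
    simp

lemma dft_mul_idft {N : ℕ} (hN : N ≠ 0) : dft N * idft N = 1 := by
  ext a b
  have hsqrt : (1 / Real.sqrt N : ℂ) * (1 / Real.sqrt N) = 1 / N := by
    rw [div_mul_div_comm, one_mul, ← Complex.ofReal_mul, Real.mul_self_sqrt (Nat.cast_nonneg N)]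
    push_cast; ring
  calc (dft N * idft N) a b
      = (1 / Real.sqrt N : ℂ) * (1 / Real.sqrt N) *
          ∑ n : Fin N, (dftRoot N ^ (b : ℕ) / dftRoot N ^ (a : ℕ)) ^ (n : ℕ) := by
        simp only [Matrix.mul_apply, dft_apply_eq, idft, Matrix.of_apply, Finset.mul_sum]
        refine Finset.sum_congr rfl fun n _ => ?_
        rw [div_pow, ← pow_mul, ← pow_mul]
        ring
    _ = (1 : Matrix (Fin N) (Fin N) ℂ) a b := by
        rw [(isPrimitiveRoot_dftRoot hN).sum_pow_div_pow, hsqrt, Matrix.one_apply]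
        split_ifs <;> field_simp; simp

lemma idft_mul_dft {N : ℕ} (hN : N ≠ 0) : idft N * dft N = 1 :=
  mul_eq_one_comm.mp (dft_mul_idft hN)

lemma isGaussianInt_iff {z : ℂ} : IsGaussianInt z ↔ ∃ x : GaussianInt, (x : ℂ) = z := by
  constructor
  · rintro ⟨a, b, rfl⟩
    exact ⟨⟨a, b⟩, GaussianInt.toComplex_def' a b⟩
  · rintro ⟨x, rfl⟩
    exact ⟨x.re, x.im, GaussianInt.toComplex_def x⟩

lemma idft_mulVec_coeff {R : Type*} [Semiring R] (f : R →+* ℂ) {N : ℕ} {p : R[X]}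
    (hp : p.natDegree < N) (n : Fin N) :
    (idft N *ᵥ fun m => f (p.coeff m)) n =
      (1 / Real.sqrt N : ℂ) * p.eval₂ f (dftRoot N ^ (n : ℕ)) := by
  rw [Matrix.mulVec, dotProduct, eval₂_eq_sum_range' f hp, Finset.mul_sum,
    ← Fin.sum_univ_eq_sum_range]
  refine Finset.sum_congr rfl fun m _ => ?_
  rw [idft, Matrix.of_apply, pow_mul]
  ring

lemma eq_zero_of_eval₂_dftRoot_pow {R : Type*} [CommRing R] {f : R →+* ℂ}
    (hf : Function.Injective f) {N : ℕ} (hN : N ≠ 0) {p : R[X]} (hp : p.natDegree < N)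
    (h : ∀ n < N, p.eval₂ f (dftRoot N ^ n) = 0) : p = 0 := by
  rw [← Polynomial.map_eq_zero_iff hf]
  refine eq_zero_of_natDegree_lt_card_of_eval_eq_zero _ (f := fun n : Fin N => dftRoot N ^ (n : ℕ))
    (fun a b hab => Fin.ext ((isPrimitiveRoot_dftRoot hN).pow_inj a.isLt b.isLt hab))
    (fun n => by rw [eval_map, h n n.isLt]) ?_
  rw [Fintype.card_fin]
  exact natDegree_map_le.trans_lt hp

lemma ModuloDFTIdentifiable.eq_zero_of_eval₂ {N : ℕ} (hN : N ≠ 0) {V : Set ℕ}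
    (hid : ModuloDFTIdentifiable N V) {p : GaussianInt[X]} (hp : p.natDegree < N)
    (hV : ∀ n < N, n ∈ V → p.eval₂ GaussianInt.toComplex (dftRoot N ^ n) = 0) : p = 0 := by
  have hs : (idft N *ᵥ fun m => GaussianInt.toComplex (p.coeff m)) = 0 := by
    refine hid _ 0 (fun n hn => ?_) (fun _ _ => rfl) (fun m => ?_)
    · rw [idft_mulVec_coeff _ hp, hV n n.isLt hn, mul_zero]
    · rw [Matrix.mulVec_mulVec, dft_mul_idft hN, Matrix.one_mulVec, Matrix.mulVec_zero,
        Pi.zero_apply, sub_zero]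
      exact isGaussianInt_iff.2 ⟨_, rfl⟩
  refine eq_zero_of_eval₂_dftRoot_pow GaussianInt.toComplex_injective hN hp fun n hn => ?_
  have := congrFun hs ⟨n, hn⟩
  rw [idft_mulVec_coeff _ hp, Pi.zero_apply] at this
  simpa [hN] using this

lemma moduloDFTIdentifiable_of_forall_eq_zero {N : ℕ} (hN : N ≠ 0) {V : Set ℕ}
    (h : ∀ p : GaussianInt[X], p.natDegree < N →
      (∀ n < N, n ∈ V → p.eval₂ GaussianInt.toComplex (dftRoot N ^ n) = 0) → p = 0) :
    ModuloDFTIdentifiable N V := by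
  intro s s' hs hs' hG
  choose c hc using fun m => isGaussianInt_iff.1 (hG m)
  set p : GaussianInt[X] := ofFn N c
  have hp : p.natDegree < N := ofFn_natDegree_lt (Nat.one_le_iff_ne_zero.2 hN) c
  have hsub : s - s' = idft N *ᵥ fun m => GaussianInt.toComplex (p.coeff m) := by
    have hy : (fun m : Fin N => GaussianInt.toComplex (p.coeff m)) = dft N *ᵥ (s - s') := by
      ext m
      rw [ofFn_coeff_eq_val_of_lt c m.isLt, hc, Matrix.mulVec_sub]
      rfl
    rw [hy, Matrix.mulVec_mulVec, idft_mul_dft hN, Matrix.one_mulVec]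
  have hp0 : p = 0 := h p hp fun n hn hnV => by
    have := congrFun hsub ⟨n, hn⟩
    rw [idft_mulVec_coeff _ hp, Pi.sub_apply, hs _ hnV, hs' _ hnV, sub_self] at this
    simpa [hN] using this.symm
  rw [← sub_eq_zero, hsub, hp0]
  simp only [coeff_zero, map_zero]
  exact Matrix.mulVec_zero _

lemma exists_ne_zero_eval₂_eq_zero_of_dvd {R : Type*} [CommRing R] [IsDomain R] (f : R →+* ℂ)
    {N : ℕ} (hN : N ≠ 0) {g : R[X]} (hg : g ∣ X ^ N - 1) (hdeg : 0 < g.natDegree) :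
    ∃ p : R[X], p ≠ 0 ∧ p.natDegree < N ∧
      ∀ n, g.eval₂ f (dftRoot N ^ n) ≠ 0 → p.eval₂ f (dftRoot N ^ n) = 0 := by
  obtain ⟨p, hgp⟩ := hg
  have hXN : (X ^ N - 1 : R[X]) ≠ 0 := X_pow_sub_C_ne_zero (Nat.pos_of_ne_zero hN) 1
  have hp : p ≠ 0 := by rintro rfl; exact hXN (by rw [hgp, mul_zero])
  refine ⟨p, hp, ?_, fun n hgn => ?_⟩
  · have := natDegree_mul (p := g) (left_ne_zero_of_mul (hgp ▸ hXN)) hp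
    rw [← hgp, ← C_1, natDegree_X_pow_sub_C] at this
    omega
  · have hroot : (X ^ N - 1 : R[X]).eval₂ f (dftRoot N ^ n) = 0 := by
      rw [eval₂_sub, eval₂_X_pow, eval₂_one, ← pow_mul, mul_comm, pow_mul,
        (isPrimitiveRoot_dftRoot hN).pow_eq_one, one_pow, sub_self]
    rw [hgp, eval₂_mul] at hroot
    exact (mul_eq_zero.mp hroot).resolve_left hgn

lemma ModuloDFTIdentifiable.exists_mem_mul_modEq {N : ℕ} (hN : N ≠ 0) {V : Set ℕ}
    (hid : ModuloDFTIdentifiable N V) {d e : ℕ} (hd : d ∣ N) (hde : d ∣ e)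
    (he : IsGaussianInt (dftRoot N ^ e)) : ∃ n < N, n ∈ V ∧ n * d ≡ e [MOD N] := by
  have hζ := isPrimitiveRoot_dftRoot hN
  obtain ⟨u, hu⟩ := isGaussianInt_iff.1 he
  have hgdvd : X ^ d - C u ∣ X ^ N - 1 := by
    have hu1 : u ^ (N / d) = 1 := by
      obtain ⟨k, rfl⟩ := hde
      apply GaussianInt.toComplex_injective
      rw [map_pow, hu, map_one, ← pow_mul, hζ.pow_eq_one_iff_dvd, mul_right_comm,
        Nat.mul_div_cancel' hd]
      exact dvd_mul_right N k
    have := sub_dvd_pow_sub_pow (X ^ d) (C u) (N / d)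
    rwa [← pow_mul, Nat.mul_div_cancel' hd, ← C_pow, hu1, C_1] at this
  have hd0 : 0 < d := Nat.pos_of_dvd_of_pos hd (Nat.pos_of_ne_zero hN)
  obtain ⟨p, hp0, hpdeg, hp⟩ := exists_ne_zero_eval₂_eq_zero_of_dvd GaussianInt.toComplex hN hgdvd
    (by rwa [natDegree_X_pow_sub_C])
  by_contra! hV
  refine hp0 (hid.eq_zero_of_eval₂ hN hpdeg fun n hn hnV => hp n ?_)
  rw [eval₂_sub, eval₂_X_pow, eval₂_C, hu, sub_ne_zero, ← pow_mul, Ne,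
    hζ.pow_eq_pow_iff_modEq hN]
  exact hV n hn hnV

open IntermediateField

lemma Complex.sq_eq_neg_one_iff {z : ℂ} : z ^ 2 = -1 ↔ z = I ∨ z = -I := by
  rw [← Complex.I_sq, sq_eq_sq_iff_eq_or_eq_neg]

lemma finrank_adjoin_of_isPrimitiveRoot_two_pow {ζ : ℂ} {k : ℕ}
    (hζ : IsPrimitiveRoot ζ (2 ^ (k + 1))) : Module.finrank ℚ ℚ⟮ζ⟯ = 2 ^ k := by
  have hpos : 0 < 2 ^ (k + 1) := by positivity
  rw [adjoin.finrank (hζ.isIntegral hpos).tower_top, ← cyclotomic_eq_minpoly_rat hζ hpos,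
    natDegree_cyclotomic, Nat.totient_prime_pow Nat.prime_two k.succ_pos]
  simp

lemma isPrimitiveRoot_of_sq_pow_two_pow_eq_neg_one {ω : ℂ} {m : ℕ} (hω : (ω ^ 2 ^ m) ^ 2 = -1) :
    IsPrimitiveRoot ω (2 ^ (m + 2)) := by
  have h1 : ω ^ 2 ^ (m + 1) = -1 := by rw [pow_succ, pow_mul, hω]
  rw [← orderOf_eq_prime_pow (p := 2) (by rw [h1]; norm_num)
    (by rw [pow_succ, pow_mul, h1]; norm_num)]
  exact IsPrimitiveRoot.orderOf ω

lemma minpoly_gaussianRat {ω : ℂ} {m : ℕ} (hω : (ω ^ 2 ^ m) ^ 2 = -1) :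
    minpoly ℚ⟮Complex.I⟯ ω = X ^ 2 ^ m - C ⟨ω ^ 2 ^ m, by
      rcases Complex.sq_eq_neg_one_iff.1 hω with h | h <;> rw [h]
      exacts [mem_adjoin_simple_self ℚ _, neg_mem (mem_adjoin_simple_self ℚ _)]⟩ := by
  set K := ℚ⟮Complex.I⟯
  have hζ := isPrimitiveRoot_of_sq_pow_two_pow_eq_neg_one hω
  have hint : IsIntegral K ω := (hζ.isIntegral (by positivity)).tower_top
  have hK : Module.finrank ℚ K = 2 := by
    simpa using finrank_adjoin_of_isPrimitiveRoot_two_pow (k := 1) Complex.isPrimitiveRoot_I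
  have hKω : K ≤ ℚ⟮ω⟯ := by
    have hpow : ω ^ 2 ^ m ∈ ℚ⟮ω⟯ := pow_mem (mem_adjoin_simple_self ℚ ω) _
    rw [adjoin_simple_le_iff]
    rcases Complex.sq_eq_neg_one_iff.1 hω with h | h
    · rwa [← h]
    · rw [← neg_neg Complex.I, ← h]; exact neg_mem hpow
  -- `ℚ(i)(ω) = ℚ(ω)` has degree `2^(m+1)` over `ℚ`
  have hdeg : Module.finrank ℚ K * (minpoly K ω).natDegree = 2 ^ (m + 1) := by
    rw [← adjoin.finrank hint, Module.finrank_mul_finrank,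
      ← finrank_adjoin_of_isPrimitiveRoot_two_pow hζ, ← sup_eq_right.2 hKω,
      ← restrictScalars_adjoin_eq_sup]
    rfl
  rw [hK, pow_succ] at hdeg
  refine (eq_of_monic_of_dvd_of_natDegree_le (minpoly.monic hint)
    (monic_X_pow_sub_C _ (by positivity)) (minpoly.dvd K ω ?_) ?_).symm
  · simp
  · rw [natDegree_X_pow_sub_C]; omega

lemma aeval_eq_zero_of_pow_two_pow_eq {ω₁ ω₂ : ℂ} {m : ℕ} (hω : (ω₁ ^ 2 ^ m) ^ 2 = -1)
    (h : ω₁ ^ 2 ^ m = ω₂ ^ 2 ^ m) {p : ℚ⟮Complex.I⟯[X]} (hp : aeval ω₁ p = 0) :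
    aeval ω₂ p = 0 := by
  obtain ⟨q, rfl⟩ := minpoly.dvd _ _ hp
  simp [minpoly_gaussianRat hω, h]

lemma eval₂_eq_zero_of_pow_two_pow_eq {ω₁ ω₂ : ℂ} {m : ℕ} (hω : (ω₁ ^ 2 ^ m) ^ 2 = -1)
    (h : ω₁ ^ 2 ^ m = ω₂ ^ 2 ^ m) {p : GaussianInt[X]}
    (hp : p.eval₂ GaussianInt.toComplex ω₁ = 0) : p.eval₂ GaussianInt.toComplex ω₂ = 0 := by
  let φ : GaussianInt →+* ℚ⟮Complex.I⟯ := GaussianInt.toComplex.codRestrict _ fun x => by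
    rw [GaussianInt.toComplex_def]
    exact add_mem (intCast_mem _ _) (mul_mem (intCast_mem _ _) (mem_adjoin_simple_self ℚ _))
  have key : ∀ ω, p.eval₂ GaussianInt.toComplex ω = aeval ω (p.map φ) := fun ω => by
    rw [aeval_def, eval₂_map]; rfl
  rw [key] at hp ⊢
  exact aeval_eq_zero_of_pow_two_pow_eq hω h hp

lemma Nat.mul_modEq_mul_iff_exists {a b c n : ℕ} (hb : b ≠ 0) (hc : c < a) (hn : n < a * b) :
    n * b ≡ c * b [MOD a * b] ↔ ∃ i < b, n = i * a + c := by
  rw [Nat.ModEq.mul_right_cancel_iff' hb, Nat.ModEq, Nat.mod_eq_of_lt hc]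
  constructor
  · intro h
    refine ⟨n / a, Nat.div_lt_of_lt_mul hn, ?_⟩
    rw [← h, mul_comm, Nat.div_add_mod]
  · rintro ⟨i, -, rfl⟩
    rw [Nat.add_comm, Nat.add_mul_mod_self_right, Nat.mod_eq_of_lt hc]

lemma two_pow_modEq_iff {M m c n : ℕ} (hm : m + 2 ≤ M) (hc : c < 4) (hn : n < 2 ^ M) :
    n * 2 ^ m ≡ c * 2 ^ (M - 2) [MOD 2 ^ M] ↔
      ∃ i ≤ 2 ^ m - 1, n = i * 2 ^ (M - m) + c * 2 ^ (M - m - 2) := by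
  obtain ⟨k, rfl⟩ := Nat.exists_eq_add_of_le hm
  have hN : 2 ^ (m + 2 + k) = 2 ^ (k + 2) * 2 ^ m := by rw [← pow_add]; ring_nf
  have hck : c * 2 ^ k < 2 ^ (k + 2) := by
    rw [pow_add, mul_comm (2 ^ k)]
    exact Nat.mul_lt_mul_of_pos_right (by omega) (Nat.two_pow_pos k)
  rw [show m + 2 + k - m - 2 = k by omega, show m + 2 + k - m = k + 2 by omega,
    show m + 2 + k - 2 = k + m by omega, pow_add 2 k m, ← mul_assoc, hN,
    Nat.mul_modEq_mul_iff_exists (by positivity) hck (hN ▸ hn)]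
  simp only [Nat.lt_iff_le_pred (Nat.two_pow_pos m)]

lemma exists_modEq_two_pow {M n : ℕ} (hn : n < 2 ^ M) (h0 : n ≠ 0) (hh : n ≠ 2 ^ (M - 1)) :
    ∃ m, m + 2 ≤ M ∧ ∃ c, (c = 1 ∨ c = 3) ∧ n * 2 ^ m ≡ c * 2 ^ (M - 2) [MOD 2 ^ M] := by
  obtain ⟨k, j, hj, rfl⟩ := Nat.exists_eq_two_pow_mul_odd h0
  have hk : k < M := by
    by_contra! hk
    exact hn.not_ge ((Nat.pow_le_pow_right two_pos hk).trans (Nat.le_mul_of_pos_right _ hj.pos))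
  have hk' : k ≠ M - 1 := by
    rintro rfl
    rw [← Nat.sub_add_cancel (show 1 ≤ M by omega), pow_succ, Nat.add_sub_cancel] at hn
    obtain rfl : j = 1 := by
      obtain ⟨t, rfl⟩ := hj
      have := Nat.lt_of_mul_lt_mul_left hn
      omega
    exact hh (mul_one _)
  refine ⟨M - 2 - k, by omega, j % 4, by obtain ⟨t, rfl⟩ := hj; omega, ?_⟩
  rw [mul_comm (2 ^ k), mul_assoc, ← pow_add, show k + (M - 2 - k) = M - 2 by omega,
    show 2 ^ M = 2 ^ 2 * 2 ^ (M - 2) by rw [← pow_add]; congr 1; omega]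
  exact Nat.ModEq.mul_right' _ (Nat.mod_modEq j 4).symm

lemma dftRoot_pow_eq_neg_one {N k : ℕ} (h : N = k * 2) (hk : k ≠ 0) : dftRoot N ^ k = -1 := by
  have : (2 * Real.pi * Complex.I * k / N : ℂ) = Real.pi * Complex.I := by
    rw [h]; push_cast; field_simp
  rw [dftRoot_pow, this, Complex.exp_pi_mul_I]

lemma dftRoot_pow_eq_I {N k : ℕ} (h : N = k * 4) (hk : k ≠ 0) : dftRoot N ^ k = Complex.I := by
  have : (2 * Real.pi * Complex.I * k / N : ℂ) = Real.pi / 2 * Complex.I := by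
    rw [h]; push_cast; field_simp; ring
  rw [dftRoot_pow, this, Complex.exp_pi_div_two_mul_I]

namespace ModuloDFTIdentifiable

variable {M : ℕ} {V : Set ℕ}

lemma zero_mem (hid : ModuloDFTIdentifiable (2 ^ M) V) : 0 ∈ V := by
  obtain ⟨n, hn, hnV, hmod⟩ := hid.exists_mem_mul_modEq (by positivity) (one_dvd _) (one_dvd 0)
    (isGaussianInt_iff.2 ⟨1, by simp⟩)
  rw [mul_one, Nat.ModEq, Nat.mod_eq_of_lt hn, Nat.zero_mod] at hmod
  rwa [← hmod]

lemma two_pow_pred_mem (hid : ModuloDFTIdentifiable (2 ^ M) V) (hM : 0 < M) :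
    2 ^ (M - 1) ∈ V := by
  have h2 : 2 ^ M = 2 ^ (M - 1) * 2 := (pow_sub_mul_pow 2 hM).symm
  obtain ⟨n, hn, hnV, hmod⟩ := hid.exists_mem_mul_modEq (by positivity) (one_dvd _) (one_dvd _)
    (isGaussianInt_iff.2 ⟨-1, by rw [dftRoot_pow_eq_neg_one h2 (by positivity)]; simp⟩)
  rw [mul_one, Nat.ModEq, Nat.mod_eq_of_lt hn, Nat.mod_eq_of_lt (by omega)] at hmod
  rwa [← hmod]

lemma exists_mem_of_lt_four (hid : ModuloDFTIdentifiable (2 ^ M) V) {m c : ℕ}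
    (hm : m + 2 ≤ M) (hc : c < 4) :
    ∃ i ≤ 2 ^ m - 1, i * 2 ^ (M - m) + c * 2 ^ (M - m - 2) ∈ V := by
  obtain ⟨n, hn, hnV, hmod⟩ := hid.exists_mem_mul_modEq (d := 2 ^ m) (e := c * 2 ^ (M - 2))
    (by positivity) (pow_dvd_pow 2 (by omega)) (dvd_mul_of_dvd_right (pow_dvd_pow 2 (by omega)) c)
    (isGaussianInt_iff.2 ⟨⟨0, 1⟩ ^ c, by
      rw [map_pow, mul_comm, pow_mul,
        dftRoot_pow_eq_I (pow_sub_mul_pow 2 (by omega : 2 ≤ M)).symm (by positivity),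
        GaussianInt.toComplex_def']
      simp⟩)
  obtain ⟨i, hi, rfl⟩ := (two_pow_modEq_iff hm hc hn).1 hmod
  exact ⟨i, hi, hnV⟩

end ModuloDFTIdentifiable

lemma moduloDFTIdentifiable_two_pow {M : ℕ} {V : Set ℕ} (hV : ∀ n ∈ V, n < 2 ^ M)
    (h0 : 0 ∈ V) (hh : 2 ^ (M - 1) ∈ V)
    (hcl : ∀ m, m + 2 ≤ M → ∀ c, (c = 1 ∨ c = 3) →
      ∃ i ≤ 2 ^ m - 1, i * 2 ^ (M - m) + c * 2 ^ (M - m - 2) ∈ V) :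
    ModuloDFTIdentifiable (2 ^ M) V := by
  have hN : 2 ^ M ≠ 0 := by positivity
  have hζ := isPrimitiveRoot_dftRoot hN
  refine moduloDFTIdentifiable_of_forall_eq_zero hN fun p hp hpV => ?_
  refine eq_zero_of_eval₂_dftRoot_pow GaussianInt.toComplex_injective hN hp fun n hn => ?_
  by_cases hn0 : n = 0
  · exact hpV n hn (hn0 ▸ h0)
  by_cases hnh : n = 2 ^ (M - 1)
  · exact hpV n hn (hnh ▸ hh)
  obtain ⟨m, hm, c, hc, hnc⟩ := exists_modEq_two_pow hn hn0 hnh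
  obtain ⟨i, hi, hiV⟩ := hcl m hm c hc
  set n' := i * 2 ^ (M - m) + c * 2 ^ (M - m - 2)
  have hn'c : n' * 2 ^ m ≡ c * 2 ^ (M - 2) [MOD 2 ^ M] :=
    (two_pow_modEq_iff hm (by omega) (hV _ hiV)).2 ⟨i, hi, rfl⟩
  have hI : (dftRoot (2 ^ M) ^ n') ^ 2 ^ m = Complex.I ^ c := by
    rw [← pow_mul, (hζ.pow_eq_pow_iff_modEq hN).2 hn'c, mul_comm, pow_mul,
      dftRoot_pow_eq_I (pow_sub_mul_pow 2 (by omega : 2 ≤ M)).symm (by positivity)]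
  refine eval₂_eq_zero_of_pow_two_pow_eq (m := m) ?_ ?_ (hpV n' (hV _ hiV) hiV)
  · rw [hI, ← pow_mul, mul_comm, pow_mul, Complex.I_sq]
    exact Odd.neg_one_pow (by rcases hc with rfl | rfl <;> decide)
  · rw [← pow_mul, ← pow_mul, hζ.pow_eq_pow_iff_modEq hN]
    exact hn'c.trans hnc.symm

/-- for N = 2^M, the modulo-DFT sensing model is identifiable on ℂ^N_𝒱 iff
0 ∈ 𝒱, 2^{M−1} ∈ 𝒱, and for every m with m + 2 ≤ M (i.e. 0 ≤ m ≤ M−2) the set 𝒱 meets both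
{i·2^{M−m} + 2^{M−m−2} : 0 ≤ i ≤ 2^m−1} and {i·2^{M−m} + 3·2^{M−m−2} : 0 ≤ i ≤ 2^m−1}. -/
theorem stmt3 (M : ℕ) (hM : 0 < M) (V : Set ℕ) (hV : ∀ n ∈ V, n < 2 ^ M) :
    ModuloDFTIdentifiable (2 ^ M) V ↔
      (0 ∈ V ∧ 2 ^ (M - 1) ∈ V ∧
        ∀ m : ℕ, m + 2 ≤ M →
          (∃ i : ℕ, i ≤ 2 ^ m - 1 ∧ i * 2 ^ (M - m) + 2 ^ (M - m - 2) ∈ V) ∧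
          (∃ i : ℕ, i ≤ 2 ^ m - 1 ∧ i * 2 ^ (M - m) + 3 * 2 ^ (M - m - 2) ∈ V)) := by
  refine ⟨fun hid => ⟨hid.zero_mem, hid.two_pow_pred_mem hM, fun m hm => ⟨?_,
    hid.exists_mem_of_lt_four hm (by norm_num)⟩⟩,
    fun ⟨h0, hh, hcl⟩ => moduloDFTIdentifiable_two_pow hV h0 hh ?_⟩
  · simpa using hid.exists_mem_of_lt_four (c := 1) hm (by norm_num)
  · rintro m hm c (rfl | rfl)
    · simpa using (hcl m hm).1
    · exact (hcl m hm).2
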